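/- Let U and V be two-dimensional real vector spaces and B : U × U → V a symmetric bilinear map. Then Q_B is surjective if and only if B is indefinite (i.e., for every nonzero λ ∈ V*, λ ∘ Q_B is neither positive-semidefinite nor negative-semidefinite). -/

import Mathlib

/-!
Identify `U` with `ℂ`. As `‖z‖²`, `Re z²`, `Im z²` span the real quadratic forms on `ℂ ≅ ℝ²`,
`B u u` becomes `‖z‖² A + Re(z²) D + Im(z²) E`, and by Cauchy–Schwarz a functional `l` makes this
indefinite iff `l(A)² < l(D)² + l(E)²`. Asking this for every `l ≠ 0` forces `D, E` to be a basis
and `A = α.re D + α.im E` with `‖α‖ < 1`. In these coordinates the map is `z ↦ z² + ‖z‖² α`, which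
is onto: for a target `w` choose `ρ ≥ 0` with `‖w - ρ α‖ = ρ` by the intermediate value theorem,
and let `z` be a square root of `w - ρ α`.
-/

open Complex Module Submodule

section Indefinite

variable {X V : Type*} [AddCommGroup V] [Module ℝ V]

def IsIndefinite (f : X → V) : Prop :=
  ∀ l : V →ₗ[ℝ] ℝ, l ≠ 0 → (∃ x, 0 < l (f x)) ∧ ∃ x, l (f x) < 0

theorem Function.Surjective.isIndefinite {f : X → V} (hf : f.Surjective) : IsIndefinite f := by
  intro l hl
  obtain ⟨x, hx⟩ := (LinearMap.surjective hl).comp hf 1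
  obtain ⟨y, hy⟩ := (LinearMap.surjective hl).comp hf (-1)
  exact ⟨⟨x, one_pos.trans_eq hx.symm⟩, ⟨y, hy.trans_lt neg_one_lt_zero⟩⟩

theorem isIndefinite_comp_iff {Y : Type*} {f : X → V} {e : Y → X} (he : e.Surjective) :
    IsIndefinite (f ∘ e) ↔ IsIndefinite f := by
  simp only [IsIndefinite, Function.comp_apply, he.exists]

end Indefinite

theorem abs_mul_re_add_mul_im_le {α β γ : ℝ} (h : β ^ 2 + γ ^ 2 ≤ α ^ 2) (w : ℂ) :
    |β * w.re + γ * w.im| ≤ |α| * ‖w‖ := by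
  have hw : w.re ^ 2 + w.im ^ 2 = ‖w‖ ^ 2 := by rw [← normSq_eq_norm_sq, normSq_apply]; ring
  refine abs_le_of_sq_le_sq ?_ (by positivity)
  calc (β * w.re + γ * w.im) ^ 2
      ≤ (β ^ 2 + γ ^ 2) * (w.re ^ 2 + w.im ^ 2) := by nlinarith [sq_nonneg (β * w.im - γ * w.re)]
    _ ≤ (|α| * ‖w‖) ^ 2 := by rw [hw, mul_pow, sq_abs]; gcongr

theorem exists_norm_sub_smul_eq {E : Type*} [SeminormedAddCommGroup E] [NormedSpace ℝ E]
    {α : E} (hα : ‖α‖ < 1) (w : E) : ∃ ρ : ℝ, ‖w - ρ • α‖ = ρ := by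
  set R := ‖w‖ / (1 - ‖α‖)
  have hR : 0 ≤ R := div_nonneg (norm_nonneg w) (by linarith)
  have hcont : ContinuousOn (fun ρ : ℝ => ‖w - ρ • α‖ - ρ) (Set.Icc 0 R) := by fun_prop
  have hR_le : ‖w - R • α‖ - R ≤ 0 := by
    have : R * (1 - ‖α‖) = ‖w‖ := div_mul_cancel₀ _ (by linarith)
    calc ‖w - R • α‖ - R ≤ ‖w‖ + R * ‖α‖ - R := by
          gcongr; exact (norm_sub_le _ _).trans_eq (by rw [norm_smul, Real.norm_of_nonneg hR])
      _ = 0 := by linarith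
  obtain ⟨ρ, -, hρ⟩ := intermediate_value_Icc' hR hcont ⟨hR_le, by simp⟩
  exact ⟨ρ, sub_eq_zero.mp hρ⟩

theorem exists_sq_add_sq_norm_smul_eq {α : ℂ} (hα : ‖α‖ < 1) (w : ℂ) :
    ∃ z : ℂ, z ^ 2 + ‖z‖ ^ 2 • α = w := by
  obtain ⟨ρ, hρ⟩ := exists_norm_sub_smul_eq hα w
  obtain ⟨z, hz⟩ := IsAlgClosed.exists_pow_nat_eq (w - ρ • α) two_pos
  refine ⟨z, ?_⟩
  rw [← norm_pow, hz, hρ]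
  abel

theorem LinearMap.apply_eq_re_smul_add_im_smul {M : Type*} [AddCommGroup M] [Module ℝ M]
    (f : ℂ →ₗ[ℝ] M) (z : ℂ) : f z = z.re • f 1 + z.im • f I := by
  conv_lhs => rw [show z = z.re • (1 : ℂ) + z.im • I by simp]
  rw [map_add, map_smul, map_smul]

section ComplexQuadratic

variable {V : Type*} [AddCommGroup V] [Module ℝ V]

noncomputable def complexQuadratic (A D E : V) (z : ℂ) : V :=
  ‖z‖ ^ 2 • A + (z ^ 2).re • D + (z ^ 2).im • E

theorem LinearMap.map_complexQuadratic {W : Type*} [AddCommGroup W] [Module ℝ W]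
    (f : V →ₗ[ℝ] W) (A D E : V) (z : ℂ) :
    f (complexQuadratic A D E z) = complexQuadratic (f A) (f D) (f E) z := by
  simp [complexQuadratic]

theorem LinearMap.apply_self_eq_complexQuadratic {U : Type*} [AddCommGroup U] [Module ℝ U]
    (B : U →ₗ[ℝ] U →ₗ[ℝ] V) (f : ℂ →ₗ[ℝ] U) (z : ℂ) :
    B (f z) (f z) = complexQuadratic ((2⁻¹ : ℝ) • (B (f 1) (f 1) + B (f I) (f I)))
      ((2⁻¹ : ℝ) • (B (f 1) (f 1) - B (f I) (f I)))
      ((2⁻¹ : ℝ) • (B (f 1) (f I) + B (f I) (f 1))) z := by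
  rw [f.apply_eq_re_smul_add_im_smul, complexQuadratic, ← normSq_eq_norm_sq, normSq_apply]
  simp only [sq, mul_re, mul_im, map_add, map_smul, LinearMap.add_apply, LinearMap.smul_apply]
  module

theorem sq_lt_of_exists_complexQuadratic_pos_neg {α β γ : ℝ}
    (hpos : ∃ z, 0 < complexQuadratic α β γ z) (hneg : ∃ z, complexQuadratic α β γ z < 0) :
    α ^ 2 < β ^ 2 + γ ^ 2 := by
  by_contra! h
  obtain ⟨z, hz⟩ := hpos
  obtain ⟨z', hz'⟩ := hneg
  have hb := abs_le.mp (abs_mul_re_add_mul_im_le h (z ^ 2))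
  have hb' := abs_le.mp (abs_mul_re_add_mul_im_le h (z' ^ 2))
  simp only [complexQuadratic, smul_eq_mul, norm_pow] at hz hz' hb hb'
  rcases le_total 0 α with hα | hα
  · rw [abs_of_nonneg hα] at hb'; nlinarith
  · rw [abs_of_nonpos hα] at hb; nlinarith

variable {A D E : V}

theorem IsIndefinite.sq_lt (h : IsIndefinite (complexQuadratic A D E)) {l : V →ₗ[ℝ] ℝ}
    (hl : l ≠ 0) : l A ^ 2 < l D ^ 2 + l E ^ 2 := by
  obtain ⟨hpos, hneg⟩ := h l hl
  simp only [l.map_complexQuadratic] at hpos hneg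
  exact sq_lt_of_exists_complexQuadratic_pos_neg hpos hneg

theorem IsIndefinite.top_le_span (h : IsIndefinite (complexQuadratic A D E)) :
    ⊤ ≤ span ℝ (Set.range ![D, E]) := by
  rw [top_le_iff]
  by_contra hspan
  obtain ⟨l, hl, hker⟩ := exists_le_ker_of_lt_top _ (lt_top_iff_ne_top.mpr hspan)
  have hD : l D = 0 := hker (subset_span ⟨0, rfl⟩)
  have hE : l E = 0 := hker (subset_span ⟨1, rfl⟩)
  exact (h.sq_lt hl).not_ge (by simp [hD, hE, sq_nonneg])

theorem IsIndefinite.exists_norm_lt_one (hV : finrank ℝ V = 2)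
    (h : IsIndefinite (complexQuadratic A D E)) :
    ∃ α : ℂ, ‖α‖ < 1 ∧ A = α.re • D + α.im • E := by
  let b := basisOfTopLeSpanOfCardEqFinrank ![D, E] h.top_le_span (by simp [hV])
  have hb : ⇑b = ![D, E] := coe_basisOfTopLeSpanOfCardEqFinrank _ _ _
  set α : ℂ := ⟨b.repr A 0, b.repr A 1⟩
  have hA : A = α.re • D + α.im • E := by
    simpa [hb, Fin.sum_univ_two] using (b.sum_repr A).symm
  refine ⟨α, ?_, hA⟩
  rcases eq_or_ne α 0 with hα | hα
  · simp [hα]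
  -- the functional dual to `α` in the basis `D, E` takes the value `‖α‖²` at `A`
  let l := b.constr ℝ ![α.re, α.im]
  have hlD : l D = α.re := by
    simpa only [hb, Matrix.cons_val_zero] using b.constr_basis ℝ ![α.re, α.im] 0
  have hlE : l E = α.im := by
    simpa only [hb, Matrix.cons_val_one, Matrix.cons_val_zero] using
      b.constr_basis ℝ ![α.re, α.im] 1
  have hl : l ≠ 0 := fun hl => hα (Complex.ext (by simp [← hlD, hl]) (by simp [← hlE, hl]))
  have hlA : l A = ‖α‖ ^ 2 := by
    rw [hA, map_add, map_smul, map_smul, hlD, hlE, ← normSq_eq_norm_sq, normSq_apply]; rfl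
  have hsq : (‖α‖ ^ 2) ^ 2 < ‖α‖ ^ 2 := by
    simpa only [hlA, hlD, hlE, ← normSq_eq_norm_sq, normSq_apply, ← sq] using h.sq_lt hl
  have : ‖α‖ ^ 2 < 1 := by nlinarith [pow_pos (norm_pos_iff.mpr hα) 2]
  exact (sq_lt_one_iff₀ (norm_nonneg α)).mp this

theorem IsIndefinite.surjective (hV : finrank ℝ V = 2)
    (h : IsIndefinite (complexQuadratic A D E)) : (complexQuadratic A D E).Surjective := by
  obtain ⟨α, hα, rfl⟩ := h.exists_norm_lt_one hV
  intro v
  have hspan := h.top_le_span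
  rw [Matrix.range_cons_cons_empty] at hspan
  obtain ⟨p, q, rfl⟩ := mem_span_pair.mp (hspan (mem_top : v ∈ ⊤))
  obtain ⟨z, hz⟩ := exists_sq_add_sq_norm_smul_eq hα ⟨p, q⟩
  have hre : (z ^ 2).re + ‖z‖ ^ 2 * α.re = p := by
    simpa only [add_re, smul_re, smul_eq_mul] using congrArg re hz
  have him : (z ^ 2).im + ‖z‖ ^ 2 * α.im = q := by
    simpa only [add_im, smul_im, smul_eq_mul] using congrArg im hz
  refine ⟨z, ?_⟩
  rw [complexQuadratic, ← hre, ← him]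
  module

end ComplexQuadratic

theorem surjective_iff_indefinite_dim_two_general
    {U V : Type*} [AddCommGroup U] [Module ℝ U] [FiniteDimensional ℝ U]
    [AddCommGroup V] [Module ℝ V]
    (hU : Module.finrank ℝ U = 2) (hV : Module.finrank ℝ V = 2)
    (B : U →ₗ[ℝ] U →ₗ[ℝ] V) :
    Function.Surjective (fun u => B u u) ↔
      (∀ l : V →ₗ[ℝ] ℝ, l ≠ 0 →
        (∃ u : U, 0 < l (B u u)) ∧ (∃ u : U, l (B u u) < 0)) := by
  let e : ℂ ≃ₗ[ℝ] U := .ofFinrankEq _ _ (by rw [finrank_real_complex, hU])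
  change _ ↔ IsIndefinite fun u => B u u
  rw [← e.surjective.of_comp_iff, ← isIndefinite_comp_iff e.surjective,
    show (fun u => B u u) ∘ e = _ from funext (B.apply_self_eq_complexQuadratic e.toLinearMap)]
  exact ⟨Function.Surjective.isIndefinite, IsIndefinite.surjective hV⟩

theorem surjective_iff_indefinite_dim_two
    {U V : Type*} [AddCommGroup U] [Module ℝ U] [FiniteDimensional ℝ U]
    [AddCommGroup V] [Module ℝ V] [FiniteDimensional ℝ V]
    (hU : Module.finrank ℝ U = 2) (hV : Module.finrank ℝ V = 2)
    (B : U →ₗ[ℝ] U →ₗ[ℝ] V) (hB : ∀ u v, B u v = B v u) :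
    Function.Surjective (fun u => B u u) ↔
      (∀ l : V →ₗ[ℝ] ℝ, l ≠ 0 →
        (∃ u : U, 0 < l (B u u)) ∧ (∃ u : U, l (B u u) < 0)) :=
  surjective_iff_indefinite_dim_two_general hU hV B
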